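/- For every real c > 0, the limit as n → ∞ of (1/n) · ∫_{{x ∈ ℝ : |x| ≥ c}} F_n''(x) dx equals 0, where F_n'' is the second derivative of F_n(x) = log(∑_{j=0}^n e^{jx}). -/

import Mathlib

/-!
`F_n'` is the mean `G_n(x)` of `j ∈ {0, …, n}` under the weights `e^{jx}` and `F_n''` is the
corresponding variance, which is nonnegative. So `G_n` increases from `0` (at `-∞`) to `n`
(at `+∞`), and the integral of `F_n''` over `|x| ≥ c` is `G_n(-c) + (n - G_n(c)) = 2 G_n(-c)`,
by the symmetry `j ↦ n - j`. Finally `G_n(-c) ≤ ∑_j j e^{-jc} ≤ ∑_{k ≥ 0} k e^{-ck} < ∞`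
uniformly in `n`.
-/

open MeasureTheory Filter Finset Real Topology

theorem integrableOn_Iic_deriv_of_nonneg' {f f' : ℝ → ℝ} {a m : ℝ}
    (hderiv : ∀ x ∈ Set.Iic a, HasDerivAt f (f' x) x) (hf'_nonneg : ∀ x ∈ Set.Iic a, 0 ≤ f' x)
    (hf : Tendsto f atBot (𝓝 m)) : IntegrableOn f' (Set.Iic a) := by
  have hcont : ContinuousOn f (Set.Iic a) := fun x hx =>
    (hderiv x hx).continuousAt.continuousWithinAt
  have hint : ∀ x, IntegrableOn f' (Set.Ioc x a) := fun x =>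
    intervalIntegral.integrableOn_deriv_of_nonneg (hcont.mono Set.Icc_subset_Iic_self)
      (fun y hy => hderiv y hy.2.le) fun y hy => hf'_nonneg y hy.2.le
  refine integrableOn_Iic_of_intervalIntegral_norm_tendsto (f a - m) a hint tendsto_id ?_
  refine (hf.const_sub _).congr' ?_
  filter_upwards [Iic_mem_atBot a] with x hx
  rw [← intervalIntegral.integral_eq_sub_of_hasDerivAt_of_le hx
    (hcont.mono Set.Icc_subset_Iic_self) (fun y hy => hderiv y hy.2.le)
    ((intervalIntegrable_iff_integrableOn_Ioc_of_le hx).2 (hint x))]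
  refine intervalIntegral.integral_congr fun y hy => ?_
  rw [Set.uIcc_of_le hx] at hy
  exact (norm_of_nonneg (hf'_nonneg y hy.2)).symm

theorem setIntegral_le_abs_of_hasDerivAt_of_nonneg {f f' : ℝ → ℝ} {c m M : ℝ} (hc : 0 < c)
    (hderiv : ∀ x, HasDerivAt f (f' x) x) (hf'_nonneg : ∀ x, 0 ≤ f' x)
    (hbot : Tendsto f atBot (𝓝 m)) (htop : Tendsto f atTop (𝓝 M)) :
    ∫ x in {x | c ≤ |x|}, f' x = (f (-c) - m) + (M - f c) := by
  have hsplit : {x : ℝ | c ≤ |x|} = Set.Iic (-c) ∪ Set.Ici c := by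
    ext x
    simp only [Set.mem_ofPred_eq, Set.mem_union, Set.mem_Iic, Set.mem_Ici, le_abs, le_neg]
    tauto
  have hint_bot : IntegrableOn f' (Set.Iic (-c)) :=
    integrableOn_Iic_deriv_of_nonneg' (fun x _ => hderiv x) (fun x _ => hf'_nonneg x) hbot
  have hint_top : IntegrableOn f' (Set.Ici c) :=
    (integrableOn_Ici_iff_integrableOn_Ioi).2
      (integrableOn_Ioi_deriv_of_nonneg' (fun x _ => hderiv x) (fun x _ => hf'_nonneg x) htop)
  rw [hsplit, setIntegral_union (Set.Iic_disjoint_Ici.2 (by linarith)) measurableSet_Ici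
    hint_bot hint_top, integral_Ici_eq_integral_Ioi,
    integral_Iic_of_hasDerivAt_of_tendsto' (fun x _ => hderiv x) hint_bot hbot,
    integral_Ioi_of_hasDerivAt_of_nonneg' (fun x _ => hderiv x) (fun x _ => hf'_nonneg x) htop]

noncomputable section LogSumExp

variable {ι : Type*}

/- `expMoment s a k` is the `k`-th derivative of `x ↦ ∑ i ∈ s, exp (a i * x)`; `gibbsMean` and
`gibbsVariance` are the mean and variance of `a` under the weights proportional to
`exp (a i * x)`. -/
def expMoment (s : Finset ι) (a : ι → ℝ) (k : ℕ) (x : ℝ) : ℝ :=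
  ∑ i ∈ s, a i ^ k * exp (a i * x)

def gibbsMean (s : Finset ι) (a : ι → ℝ) (x : ℝ) : ℝ :=
  expMoment s a 1 x / expMoment s a 0 x

def gibbsVariance (s : Finset ι) (a : ι → ℝ) (x : ℝ) : ℝ :=
  (expMoment s a 2 x * expMoment s a 0 x - expMoment s a 1 x ^ 2) / expMoment s a 0 x ^ 2

variable {s : Finset ι} {a : ι → ℝ}

theorem expMoment_zero_eq (s : Finset ι) (a : ι → ℝ) :
    expMoment s a 0 = fun x => ∑ i ∈ s, exp (a i * x) := by
  funext x
  simp only [expMoment, pow_zero, one_mul]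

theorem expMoment_zero_pos (hs : s.Nonempty) (x : ℝ) : 0 < expMoment s a 0 x := by
  rw [expMoment_zero_eq]
  exact sum_pos (fun i _ => exp_pos _) hs

theorem expMoment_one_nonneg (ha : ∀ i ∈ s, 0 ≤ a i) (x : ℝ) : 0 ≤ expMoment s a 1 x :=
  sum_nonneg fun i hi => by simpa using mul_nonneg (ha i hi) (exp_pos (a i * x)).le

theorem hasDerivAt_expMoment (k : ℕ) (x : ℝ) :
    HasDerivAt (expMoment s a k) (expMoment s a (k + 1) x) x := by
  unfold expMoment
  refine HasDerivAt.fun_sum fun i _ => ?_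
  exact ((((hasDerivAt_id' x).const_mul (a i)).exp).const_mul (a i ^ k)).congr_deriv (by ring)

theorem gibbsMean_nonneg (ha : ∀ i ∈ s, 0 ≤ a i) (x : ℝ) : 0 ≤ gibbsMean s a x :=
  div_nonneg (expMoment_one_nonneg ha x) (sum_nonneg fun i _ => by positivity)

theorem gibbsVariance_nonneg (x : ℝ) : 0 ≤ gibbsVariance s a x := by
  refine div_nonneg (sub_nonneg.2 ?_) (sq_nonneg _)
  rw [mul_comm]
  refine sum_sq_le_sum_mul_sum_of_sq_le_mul s (fun i _ => by positivity)
    (fun i _ => by positivity) fun i _ => le_of_eq ?_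
  ring

theorem hasDerivAt_gibbsMean (hs : s.Nonempty) (x : ℝ) :
    HasDerivAt (gibbsMean s a) (gibbsVariance s a x) x := by
  refine ((hasDerivAt_expMoment 1 x).div (hasDerivAt_expMoment 0 x)
    (expMoment_zero_pos hs x).ne').congr_deriv ?_
  unfold gibbsVariance
  ring

theorem deriv_log_sum_exp (hs : s.Nonempty) :
    deriv (fun y => log (∑ i ∈ s, exp (a i * y))) = gibbsMean s a := by
  funext x
  have h := (hasDerivAt_expMoment (a := a) 0 x).log (expMoment_zero_pos hs x).ne'
  rw [expMoment_zero_eq] at h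
  rw [h.deriv, gibbsMean, expMoment_zero_eq]

theorem deriv_deriv_log_sum_exp (hs : s.Nonempty) :
    deriv (deriv (fun y => log (∑ i ∈ s, exp (a i * y)))) = gibbsVariance s a := by
  rw [deriv_log_sum_exp hs]
  exact funext fun x => (hasDerivAt_gibbsMean hs x).deriv

end LogSumExp

theorem expMoment_range_neg (n k : ℕ) (x : ℝ) :
    expMoment (range (n + 1)) Nat.cast k (-x) =
      exp (-(n * x)) * ∑ j ∈ range (n + 1), ((n : ℝ) - j) ^ k * exp (j * x) := by
  rw [expMoment, ← sum_range_reflect, mul_sum]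
  refine sum_congr rfl fun j hj => ?_
  rw [Nat.add_sub_cancel, Nat.cast_sub (Nat.le_of_lt_succ (mem_range.1 hj)), mul_left_comm,
    ← exp_add]
  ring_nf

theorem gibbsMean_range_neg (n : ℕ) (x : ℝ) :
    gibbsMean (range (n + 1)) Nat.cast (-x) = n - gibbsMean (range (n + 1)) Nat.cast x := by
  have hM0 := (expMoment_zero_pos (a := Nat.cast) (nonempty_range_add_one (n := n)) x).ne'
  have hnum : ∑ j ∈ range (n + 1), ((n : ℝ) - j) ^ 1 * exp (j * x) =
      n * expMoment (range (n + 1)) Nat.cast 0 x - expMoment (range (n + 1)) Nat.cast 1 x := by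
    simp only [expMoment, mul_sum, ← sum_sub_distrib]
    exact sum_congr rfl fun j _ => by ring
  have hden : ∑ j ∈ range (n + 1), ((n : ℝ) - j) ^ 0 * exp (j * x) =
      expMoment (range (n + 1)) Nat.cast 0 x := by
    simp only [expMoment, pow_zero]
  rw [gibbsMean, gibbsMean, expMoment_range_neg, expMoment_range_neg, mul_div_mul_left _ _
    (exp_ne_zero _), hnum, hden, sub_div, mul_div_cancel_right₀ _ hM0]

theorem tendsto_expMoment_range_atBot (n k : ℕ) :
    Tendsto (expMoment (range (n + 1)) Nat.cast k) atBot (𝓝 (0 ^ k)) := by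
  have hterm : ∀ j : ℕ, Tendsto (fun x : ℝ => ((j + 1 : ℕ) : ℝ) ^ k * exp ((j + 1 : ℕ) * x))
      atBot (𝓝 0) := fun j => by
    simpa using (tendsto_exp_atBot.comp (tendsto_id.const_mul_atBot
      (Nat.cast_pos.2 j.succ_pos))).const_mul (((j + 1 : ℕ) : ℝ) ^ k)
  have h := (tendsto_finsetSum (range n) fun j _ => hterm j).add_const ((0 : ℝ) ^ k)
  rw [sum_const_zero, zero_add] at h
  refine h.congr fun x => ?_
  simp [expMoment, sum_range_succ']

theorem tendsto_gibbsMean_range_atBot (n : ℕ) :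
    Tendsto (gibbsMean (range (n + 1)) Nat.cast) atBot (𝓝 0) := by
  have h := (tendsto_expMoment_range_atBot n 1).div (tendsto_expMoment_range_atBot n 0)
    one_ne_zero
  rwa [pow_one, zero_div] at h

theorem tendsto_gibbsMean_range_atTop (n : ℕ) :
    Tendsto (gibbsMean (range (n + 1)) Nat.cast) atTop (𝓝 n) := by
  have h := ((tendsto_gibbsMean_range_atBot n).comp tendsto_neg_atTop_atBot).const_sub (n : ℝ)
  rw [sub_zero] at h
  refine h.congr fun x => ?_
  rw [Function.comp_apply, gibbsMean_range_neg, sub_sub_cancel]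

theorem gibbsMean_range_le_tsum (n : ℕ) {x : ℝ} (hx : x < 0) :
    gibbsMean (range (n + 1)) Nat.cast x ≤ ∑' k : ℕ, k * exp x ^ k := by
  have hM0 : 1 ≤ expMoment (range (n + 1)) Nat.cast 0 x := by
    rw [expMoment_zero_eq]
    simpa using single_le_sum (f := fun j : ℕ => exp (j * x))
      (fun j _ => (exp_pos _).le) (mem_range.2 n.succ_pos)
  have hM1 : expMoment (range (n + 1)) Nat.cast 1 x ≤ ∑' k : ℕ, k * exp x ^ k := by
    have hr : ‖exp x‖ < 1 := by rwa [norm_of_nonneg (exp_pos x).le, exp_lt_one_iff]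
    simp only [expMoment, pow_one, exp_nat_mul]
    exact Summable.sum_le_tsum _ (fun k _ => by positivity)
      (by simpa using summable_pow_mul_geometric_of_norm_lt_one 1 hr)
  exact (div_le_self (expMoment_one_nonneg (fun j _ => j.cast_nonneg) x) hM0).trans hM1

/-- For every real `c > 0`, the limit as `n → ∞` of
`(1/n) · ∫_{|x| ≥ c} F_n''(x) dx` equals `0`, where `F_n(x) = log (∑_{j=0}^n e^{jx})`. -/
theorem tendsto_integral_second_deriv_log_sum_exp_tail (c : ℝ) (hc : 0 < c) :
    Tendsto
      (fun n : ℕ =>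
        (1 / (n : ℝ)) *
          ∫ x in {x : ℝ | c ≤ |x|},
            deriv (deriv (fun y : ℝ =>
              Real.log (∑ j ∈ Finset.range (n + 1), Real.exp (j * y)))) x)
      atTop (nhds 0) := by
  have hintegral : ∀ n : ℕ, ∫ x in {x : ℝ | c ≤ |x|},
      deriv (deriv (fun y : ℝ => log (∑ j ∈ range (n + 1), exp (j * y)))) x =
        2 * gibbsMean (range (n + 1)) Nat.cast (-c) := fun n => by
    rw [deriv_deriv_log_sum_exp (a := Nat.cast) nonempty_range_add_one,
      setIntegral_le_abs_of_hasDerivAt_of_nonneg hc (hasDerivAt_gibbsMean nonempty_range_add_one)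
        gibbsVariance_nonneg (tendsto_gibbsMean_range_atBot n) (tendsto_gibbsMean_range_atTop n),
      gibbsMean_range_neg]
    ring
  simp only [hintegral, one_div_mul_eq_div]
  refine squeeze_zero (fun n => div_nonneg (mul_nonneg zero_le_two
    (gibbsMean_nonneg (fun j _ => j.cast_nonneg) _)) n.cast_nonneg) (fun n => ?_)
    (tendsto_const_div_atTop_nhds_zero_nat (2 * ∑' k : ℕ, k * exp (-c) ^ k))
  gcongr
  exact gibbsMean_range_le_tsum n (neg_lt_zero.2 hc)
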